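/- Let p ≥ 2 and let ψ, ξ ∈ O_p satisfy |ψ₁₁| < 1 and |ξ₁₁| < 1. Then ψ₁₁ = ξ₁₁ if and only if there exist h₁, k₁ ∈ O_{p−1} such that diag(1, h₁) · ψ · diag(1, k₁)ᵀ = ξ. In other words, the map ψ ↦ ψ₀(ψ₁₁) is a maximal invariant for the action (h₁, k₁)·ψ = diag(1, h₁) ψ diag(1, k₁)ᵀ of O_{p−1} × O_{p−1} on O_p⁺ = {ψ ∈ O_p : |ψ₁₁| < 1}. -/

import Mathlib

open MeasureTheory Matrix

/-- The (Borel = product) σ-algebra on real matrices. -/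
instance matMeas (m n : ℕ) : MeasurableSpace (Matrix (Fin m) (Fin n) ℝ) := MeasurableSpace.pi

/-- `μ` is the Haar probability distribution on the orthogonal group `O_p`, viewed as a Borel
probability measure on the space of `p × p` real matrices which is concentrated on the set of
orthogonal matrices and invariant under left and right translation by orthogonal matrices. -/
def IsHaarOrthogonal (p : ℕ) (μ : Measure (Matrix (Fin p) (Fin p) ℝ)) : Prop :=
  IsProbabilityMeasure μ ∧
  μ {A | A ∈ Matrix.orthogonalGroup (Fin p) ℝ} = 1 ∧
  (∀ g ∈ Matrix.orthogonalGroup (Fin p) ℝ, Measure.map (fun A => g * A) μ = μ) ∧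
  (∀ g ∈ Matrix.orthogonalGroup (Fin p) ℝ, Measure.map (fun A => A * g) μ = μ)

/-- The density `f(x|p) = Γ(p/2)/(Γ(1/2)Γ((p-1)/2)) (1-x²)^((p-3)/2)` on `(-1,1)`,
extended by `0` outside `(-1,1)`. -/
noncomputable def haarEntryDensity (p : ℕ) (x : ℝ) : ENNReal :=
  ENNReal.ofReal (if x ∈ Set.Ioo (-1 : ℝ) 1 then
    (Real.Gamma ((p : ℝ) / 2) / (Real.Gamma (1 / 2) * Real.Gamma (((p : ℝ) - 1) / 2))) *
      (1 - x ^ 2) ^ (((p : ℝ) - 3) / 2)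
  else 0)

/-- `ν` is the uniform distribution on the unit sphere `S^{k-1} ⊆ ℝ^k`, viewed as the unique
rotation-invariant Borel probability measure on `ℝ^k` concentrated on the unit sphere. -/
def IsUniformOnSphere (k : ℕ) (ν : Measure (EuclideanSpace ℝ (Fin k))) : Prop :=
  IsProbabilityMeasure ν ∧ ν {u | ‖u‖ = 1} = 1 ∧
  ∀ L : EuclideanSpace ℝ (Fin k) ≃ₗᵢ[ℝ] EuclideanSpace ℝ (Fin k), Measure.map L ν = ν

/-- The `(n+1) × (n+1)` block-diagonal matrix `diag(γ, Δ)` with scalar block `γ` and lower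
block `Δ`. -/
def cornerBlock {n : ℕ} (γ : ℝ) (Δ : Matrix (Fin n) (Fin n) ℝ) :
    Matrix (Fin (n + 1)) (Fin (n + 1)) ℝ :=
  Matrix.of fun i j =>
    if hi : i = 0 then (if j = 0 then γ else 0)
    else if hj : j = 0 then 0
    else Δ (i.pred hi) (j.pred hj)

/-- The matrix `ψ₀(γ)`: the `p × p` orthogonal matrix whose first row and first column both
equal `(γ, √(1-γ²), 0, …, 0)` and whose lower-right `(p-1) × (p-1)` block is
`diag(-γ, I_{p-2})` (here `p = n+2`). -/
noncomputable def psi0 (n : ℕ) (γ : ℝ) : Matrix (Fin (n + 2)) (Fin (n + 2)) ℝ :=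
  Matrix.of fun i j =>
    if i = 0 then (if j = 0 then γ else if j = 1 then Real.sqrt (1 - γ ^ 2) else 0)
    else if i = 1 then (if j = 0 then Real.sqrt (1 - γ ^ 2) else if j = 1 then -γ else 0)
    else if i = j then 1 else 0

/-- The reflection (Householder) matrix `I - 2 w wᵀ / (wᵀ w)`. -/
noncomputable def reflMatrix (p : ℕ) (w : Fin p → ℝ) : Matrix (Fin p) (Fin p) ℝ :=
  1 - (2 / (w ⬝ᵥ w)) • Matrix.vecMulVec w w

/-! Rotate the tail of the first row of `ψ` onto that of `ξ` by a Householder reflection; both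
tails have squared norm `1 - ψ₁₁² = 1 - ξ₁₁²`, so this is possible. Then `ψ` and `ξ` share
their first row, so `ξ ψᵀ` is an orthogonal matrix with first row `e₀`, hence of the form
`diag(1, h)`. -/

section reflection

-- `reflMatrix p 0 = 1`, since `2 / 0 = 0`.
variable {p : ℕ} (w : Fin p → ℝ)

lemma reflMatrix_transpose : (reflMatrix p w)ᵀ = reflMatrix p w := by
  simp [reflMatrix, transpose_sub, transpose_smul]

lemma reflMatrix_mem_orthogonalGroup : reflMatrix p w ∈ orthogonalGroup (Fin p) ℝ := by
  rw [mem_orthogonalGroup_iff, reflMatrix_transpose]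
  set t := 2 / (w ⬝ᵥ w)
  have ht : t * t * (w ⬝ᵥ w) = 2 * t := by
    rcases eq_or_ne (w ⬝ᵥ w) 0 with h | h
    · simp [t, h]
    · simp only [t]; field_simp
  have hW : vecMulVec w w * vecMulVec w w = (w ⬝ᵥ w) • vecMulVec w w := by
    rw [vecMulVec_mul_vecMulVec, vecMulVec_smul]
  calc reflMatrix p w * reflMatrix p w
      = 1 - (2 * t) • vecMulVec w w + (t * t) • (vecMulVec w w * vecMulVec w w) := by
        simp only [reflMatrix, sub_mul, mul_sub, one_mul, mul_one, Matrix.smul_mul,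
          Matrix.mul_smul]
        module
    _ = 1 := by
        rw [hW, smul_smul, ht]
        abel

lemma reflMatrix_mulVec {v : Fin p → ℝ} (h : w ⬝ᵥ w = 2 * (w ⬝ᵥ v)) :
    reflMatrix p w *ᵥ v = v - w := by
  rcases eq_or_ne (w ⬝ᵥ w) 0 with hw | hw
  · simp [dotProduct_self_eq_zero.mp hw, reflMatrix]
  · have hc : 2 / (w ⬝ᵥ w) * (w ⬝ᵥ v) = 1 := by
      rw [h] at hw ⊢
      field_simp [right_ne_zero_of_mul hw]
    rw [reflMatrix, sub_mulVec, one_mulVec, smul_mulVec, vecMulVec_mulVec, op_smul_eq_smul,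
      smul_smul, hc, one_smul]

end reflection

lemma exists_mem_orthogonalGroup_mulVec_eq {p : ℕ} {v w : Fin p → ℝ}
    (h : v ⬝ᵥ v = w ⬝ᵥ w) : ∃ k ∈ orthogonalGroup (Fin p) ℝ, k *ᵥ v = w := by
  refine ⟨reflMatrix p (v - w), reflMatrix_mem_orthogonalGroup _, ?_⟩
  rw [reflMatrix_mulVec, sub_sub_cancel]
  simp only [sub_dotProduct, dotProduct_sub, dotProduct_comm w v]
  linarith

lemma tail_dotProduct_tail_of_mem_orthogonalGroup {n : ℕ}
    {M : Matrix (Fin (n + 1)) (Fin (n + 1)) ℝ} (hM : M ∈ orthogonalGroup (Fin (n + 1)) ℝ)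
    (i : Fin (n + 1)) :
    Fin.tail (M i) ⬝ᵥ Fin.tail (M i) = 1 - M i 0 ^ 2 := by
  have hii := congrFun (congrFun ((mem_orthogonalGroup_iff _ _).mp hM) i) i
  rw [mul_apply, Fin.sum_univ_succ, one_apply_eq] at hii
  simp only [dotProduct, Fin.tail, transpose_apply] at hii ⊢
  linarith

section cornerBlock

variable {n : ℕ} (γ : ℝ) (A : Matrix (Fin n) (Fin n) ℝ)

@[simp] lemma cornerBlock_zero_zero : cornerBlock γ A 0 0 = γ := by simp [cornerBlock]

@[simp] lemma cornerBlock_zero_succ (j : Fin n) : cornerBlock γ A 0 j.succ = 0 := by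
  simp [cornerBlock]

@[simp] lemma cornerBlock_succ_zero (i : Fin n) : cornerBlock γ A i.succ 0 = 0 := by
  simp [cornerBlock]

@[simp] lemma cornerBlock_succ_succ (i j : Fin n) : cornerBlock γ A i.succ j.succ = A i j := by
  simp [cornerBlock]

lemma cornerBlock_transpose : (cornerBlock γ A)ᵀ = cornerBlock γ Aᵀ := by
  ext i j
  refine Fin.cases ?_ (fun i => ?_) i <;> refine Fin.cases ?_ (fun j => ?_) j <;> simp

lemma cornerBlock_mul_cornerBlock (δ : ℝ) (B : Matrix (Fin n) (Fin n) ℝ) :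
    cornerBlock γ A * cornerBlock δ B = cornerBlock (γ * δ) (A * B) := by
  ext i j
  refine Fin.cases ?_ (fun i => ?_) i <;> refine Fin.cases ?_ (fun j => ?_) j <;>
    simp [mul_apply, Fin.sum_univ_succ]

lemma cornerBlock_one_one : cornerBlock 1 (1 : Matrix (Fin n) (Fin n) ℝ) = 1 := by
  ext i j
  refine Fin.cases ?_ (fun i => ?_) i <;> refine Fin.cases ?_ (fun j => ?_) j <;>
    simp [one_apply, Fin.succ_ne_zero, (Fin.succ_ne_zero _).symm]

lemma cornerBlock_injective : Function.Injective (cornerBlock (n := n) γ) := fun B C h =>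
  ext fun i j => by simpa using congrFun (congrFun h i.succ) j.succ

lemma cornerBlock_one_mem_orthogonalGroup_iff :
    cornerBlock 1 A ∈ orthogonalGroup (Fin (n + 1)) ℝ ↔ A ∈ orthogonalGroup (Fin n) ℝ := by
  rw [mem_orthogonalGroup_iff, mem_orthogonalGroup_iff, cornerBlock_transpose,
    cornerBlock_mul_cornerBlock, one_mul, ← cornerBlock_one_one]
  exact (cornerBlock_injective 1).eq_iff

lemma cornerBlock_mul_apply_zero {ι : Type*} (M : Matrix (Fin (n + 1)) ι ℝ) (j : ι) :
    (cornerBlock γ A * M) 0 j = γ * M 0 j := by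
  simp [mul_apply, Fin.sum_univ_succ]

lemma mul_cornerBlock_transpose_apply_zero {ι : Type*} (M : Matrix ι (Fin (n + 1)) ℝ)
    (i : ι) : (M * (cornerBlock γ A)ᵀ) i 0 = M i 0 * γ := by
  simp [mul_apply, Fin.sum_univ_succ]

lemma mul_cornerBlock_transpose_apply_succ {ι : Type*} (M : Matrix ι (Fin (n + 1)) ℝ) (i : ι)
    (j : Fin n) :
    (M * (cornerBlock γ A)ᵀ) i j.succ = (A *ᵥ Fin.tail (M i)) j := by
  simp [mul_apply, Fin.sum_univ_succ, mulVec, dotProduct, Fin.tail, mul_comm]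

lemma eq_cornerBlock_of_row_zero {M : Matrix (Fin (n + 1)) (Fin (n + 1)) ℝ}
    (hM : M ∈ orthogonalGroup (Fin (n + 1)) ℝ) (h0 : M 0 = Pi.single 0 1) :
    M = cornerBlock 1 (M.submatrix Fin.succ Fin.succ) := by
  have hcol : M.col 0 = Pi.single 0 1 :=
    calc M.col 0 = Pi.single 0 1 ᵥ* Mᵀ := by rw [vecMul_transpose, mulVec_single_one]
      _ = (Pi.single 0 1 ᵥ* M) ᵥ* Mᵀ := by
        rw [single_one_vecMul 0 M]
        exact congrArg (· ᵥ* Mᵀ) h0.symm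
      _ = Pi.single 0 1 := by
        rw [vecMul_vecMul, (mem_orthogonalGroup_iff _ _).mp hM, vecMul_one]
  ext i j
  refine Fin.cases ?_ (fun i => ?_) i <;> refine Fin.cases ?_ (fun j => ?_) j
  · simpa using congrFun h0 0
  · simpa using congrFun h0 j.succ
  · simpa using congrFun hcol i.succ
  · simp

lemma exists_cornerBlock_mul_eq_of_row_zero_eq {ψ ξ : Matrix (Fin (n + 1)) (Fin (n + 1)) ℝ}
    (hψ : ψ ∈ orthogonalGroup (Fin (n + 1)) ℝ) (hξ : ξ ∈ orthogonalGroup (Fin (n + 1)) ℝ)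
    (h0 : ψ 0 = ξ 0) : ∃ h ∈ orthogonalGroup (Fin n) ℝ, cornerBlock 1 h * ψ = ξ := by
  set M := ξ * ψᵀ with hM_def
  have hM : M ∈ orthogonalGroup (Fin (n + 1)) ℝ :=
    mul_mem hξ (transpose_mem_unitaryGroup_iff.mpr hψ)
  have hrow : M 0 = Pi.single 0 1 := by
    ext j
    rw [hM_def, mul_apply, ← h0, ← mul_apply, (mem_orthogonalGroup_iff _ _).mp hψ,
      one_eq_pi_single]
  have hMblock := eq_cornerBlock_of_row_zero hM hrow
  refine ⟨M.submatrix Fin.succ Fin.succ,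
    (cornerBlock_one_mem_orthogonalGroup_iff _).mp (hMblock ▸ hM), ?_⟩
  rw [← hMblock, hM_def, mul_assoc, (mem_orthogonalGroup_iff' _ _).mp hψ, mul_one]

end cornerBlock

theorem entry_eq_iff_same_orbit_general (n : ℕ)
    (ψ ξ : Matrix (Fin (n + 2)) (Fin (n + 2)) ℝ)
    (hψ : ψ ∈ Matrix.orthogonalGroup (Fin (n + 2)) ℝ)
    (hξ : ξ ∈ Matrix.orthogonalGroup (Fin (n + 2)) ℝ) :
    ψ 0 0 = ξ 0 0 ↔
      ∃ h₁ k₁ : Matrix (Fin (n + 1)) (Fin (n + 1)) ℝ,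
        h₁ ∈ Matrix.orthogonalGroup (Fin (n + 1)) ℝ ∧
        k₁ ∈ Matrix.orthogonalGroup (Fin (n + 1)) ℝ ∧
        cornerBlock 1 h₁ * ψ * (cornerBlock 1 k₁)ᵀ = ξ := by
  constructor
  · intro h00
    obtain ⟨k₁, hk₁, hk₁ψ⟩ := exists_mem_orthogonalGroup_mulVec_eq
      (v := Fin.tail (ψ 0)) (w := Fin.tail (ξ 0)) (by
        rw [tail_dotProduct_tail_of_mem_orthogonalGroup hψ,
          tail_dotProduct_tail_of_mem_orthogonalGroup hξ, h00])
    have hrow : (ψ * (cornerBlock 1 k₁)ᵀ) 0 = ξ 0 := by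
      ext j
      refine Fin.cases ?_ (fun j => ?_) j
      · rw [mul_cornerBlock_transpose_apply_zero, mul_one, h00]
      · rw [mul_cornerBlock_transpose_apply_succ, hk₁ψ, Fin.tail]
    have hψk₁ : ψ * (cornerBlock 1 k₁)ᵀ ∈ orthogonalGroup (Fin (n + 2)) ℝ :=
      mul_mem hψ (transpose_mem_unitaryGroup_iff.mpr
        ((cornerBlock_one_mem_orthogonalGroup_iff _).mpr hk₁))
    obtain ⟨h₁, hh₁, hψξ⟩ := exists_cornerBlock_mul_eq_of_row_zero_eq hψk₁ hξ hrow
    exact ⟨h₁, k₁, hh₁, hk₁, by rw [mul_assoc, hψξ]⟩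
  · rintro ⟨h₁, k₁, -, -, rfl⟩
    rw [mul_cornerBlock_transpose_apply_zero, cornerBlock_mul_apply_zero, one_mul, mul_one]

/-- Proposition 2.2.  Let `p = n+2 ≥ 2` and let `ψ, ξ ∈ O_p` with
`|ψ₁₁| < 1` and `|ξ₁₁| < 1`.  Then `ψ₁₁ = ξ₁₁` iff `ψ` and `ξ` lie in the same orbit of the
action `(h₁,k₁)·ψ = diag(1,h₁) ψ diag(1,k₁)ᵀ` of `O_{p-1} × O_{p-1}` on `O_p⁺`; i.e. the map
`ψ ↦ ψ₀(ψ₁₁)` is a maximal invariant. -/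
theorem entry_eq_iff_same_orbit (n : ℕ)
    (ψ ξ : Matrix (Fin (n + 2)) (Fin (n + 2)) ℝ)
    (hψ : ψ ∈ Matrix.orthogonalGroup (Fin (n + 2)) ℝ) (hψ11 : |ψ 0 0| < 1)
    (hξ : ξ ∈ Matrix.orthogonalGroup (Fin (n + 2)) ℝ) (hξ11 : |ξ 0 0| < 1) :
    ψ 0 0 = ξ 0 0 ↔
      ∃ h₁ k₁ : Matrix (Fin (n + 1)) (Fin (n + 1)) ℝ,
        h₁ ∈ Matrix.orthogonalGroup (Fin (n + 1)) ℝ ∧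
        k₁ ∈ Matrix.orthogonalGroup (Fin (n + 1)) ℝ ∧
        cornerBlock 1 h₁ * ψ * (cornerBlock 1 k₁)ᵀ = ξ :=
  entry_eq_iff_same_orbit_general n ψ ξ hψ hξ
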